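/- Let d ∈ [1,+∞], let (D_t)_{t≥0} be a canonical domain system of order d, and let (f_t)_{t≥0} be a Loewner chain of order d over (D_t). For 0 ≤ s ≤ t define φ_{s,t} := f_t^{-1} ∘ f_s (well defined on D_s because f_s(D_s) ⊆ f_t(D_t) and f_t is injective). Then each φ_{s,t} is a holomorphic map from D_s into D_t, and the family (φ_{s,t})_{0≤s≤t} is an evolution family of order d over (D_t). -/

import Mathlib

open MeasureTheory Set Filter Metric
open scoped ENNReal NNReal Topology

noncomputable section

/-- The annulus `𝔸_r = {z : r < |z| < 1}`.  For `r = 0` this is the punctured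
unit disk `𝔻*`. -/
def stdAnnulus (r : ℝ) : Set ℂ := {z : ℂ | r < ‖z‖ ∧ ‖z‖ < 1}

/-- The exterior of the closed unit disk, `ℂ ∖ cl 𝔻`. -/
def extDisk : Set ℂ := {z : ℂ | 1 < ‖z‖}

/-- The punctured plane `ℂ* = ℂ ∖ {0}`. -/
def punctPlane : Set ℂ := {z : ℂ | z ≠ 0}

/-- `ω(r) = -π / log r` for `r ∈ (0,1)`, and `ω(0) = 0`. -/
def omegaFun (r : ℝ) : ℝ := if r = 0 then 0 else -Real.pi / Real.log r

/-- `f ∈ AC^d([0,∞))`: `f` is locally absolutely continuous on `[0,∞)` with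
(a.e.) derivative of class `L^d_loc`; the derivative is represented by a
function `g` via the fundamental theorem of calculus. -/
def ACd (d : ℝ≥0∞) (f : ℝ → ℝ) : Prop :=
  ∃ g : ℝ → ℝ,
    (∀ T : ℝ, 0 < T → MemLp g d (volume.restrict (Icc (0:ℝ) T))) ∧
    ∀ a b : ℝ, 0 ≤ a → a ≤ b → f b - f a = ∫ t in a..b, g t

/-- A (doubly connected) canonical domain system of order `d`: a family of
annuli `D_t = 𝔸_{r t}` such that `t ↦ ω(r t)` is non-increasing and of class
`AC^d` on `[0,∞)`. -/
structure CanonicalDomainSystem (d : ℝ≥0∞) where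
  r : ℝ → ℝ
  r_nonneg : ∀ t : ℝ, 0 ≤ t → 0 ≤ r t
  r_lt_one : ∀ t : ℝ, 0 ≤ t → r t < 1
  omega_anti : ∀ ⦃s t : ℝ⦄, 0 ≤ s → s ≤ t → omegaFun (r t) ≤ omegaFun (r s)
  omega_ACd : ACd d fun t => omegaFun (r t)

/-- A Loewner chain of order `d` over the canonical domain system `D`. -/
structure IsLoewnerChain (d : ℝ≥0∞) (D : CanonicalDomainSystem d) (f : ℝ → ℂ → ℂ) : Prop where
  holo : ∀ t : ℝ, 0 ≤ t → DifferentiableOn ℂ (f t) (stdAnnulus (D.r t))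
  inj : ∀ t : ℝ, 0 ≤ t → InjOn (f t) (stdAnnulus (D.r t))
  mono : ∀ ⦃s t : ℝ⦄, 0 ≤ s → s ≤ t →
    f s '' stdAnnulus (D.r s) ⊆ f t '' stdAnnulus (D.r t)
  lc3 : ∀ S T : ℝ, 0 ≤ S → S ≤ T → ∀ K : Set ℂ, IsCompact K → K ⊆ stdAnnulus (D.r S) →
    ∃ k : ℝ → ℝ, (∀ x, 0 ≤ k x) ∧ MemLp k d (volume.restrict (Icc S T)) ∧
      ∀ z ∈ K, ∀ s t : ℝ, S ≤ s → s ≤ t → t ≤ T →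
        ‖f s z - f t z‖ ≤ ∫ ξ in s..t, k ξ

/-- An evolution family of order `d` over the canonical domain system `D`. -/
structure IsEvolutionFamily (d : ℝ≥0∞) (D : CanonicalDomainSystem d)
    (φ : ℝ → ℝ → ℂ → ℂ) : Prop where
  holo : ∀ ⦃s t : ℝ⦄, 0 ≤ s → s ≤ t → DifferentiableOn ℂ (φ s t) (stdAnnulus (D.r s))
  mapsTo : ∀ ⦃s t : ℝ⦄, 0 ≤ s → s ≤ t →
    MapsTo (φ s t) (stdAnnulus (D.r s)) (stdAnnulus (D.r t))
  ef1 : ∀ s : ℝ, 0 ≤ s → ∀ z ∈ stdAnnulus (D.r s), φ s s z = z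
  ef2 : ∀ ⦃s u t : ℝ⦄, 0 ≤ s → s ≤ u → u ≤ t → ∀ z ∈ stdAnnulus (D.r s),
    φ s t z = φ u t (φ s u z)
  ef3 : ∀ S T : ℝ, 0 ≤ S → S ≤ T → ∀ z ∈ stdAnnulus (D.r S),
    ∃ k : ℝ → ℝ, (∀ x, 0 ≤ k x) ∧ MemLp k d (volume.restrict (Icc S T)) ∧
      ∀ s u t : ℝ, S ≤ s → s ≤ u → u ≤ t → t ≤ T →
        ‖φ s u z - φ s t z‖ ≤ ∫ ξ in u..t, k ξ

/-- The domain `𝒟 = {(z,t) : t ≥ 0, z ∈ D_t}` of a weak holomorphic vector field. -/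
def vfDomain {d : ℝ≥0∞} (D : CanonicalDomainSystem d) : Set (ℂ × ℝ) :=
  {p : ℂ × ℝ | 0 ≤ p.2 ∧ p.1 ∈ stdAnnulus (D.r p.2)}

/-- A weak holomorphic vector field of order `d` over `D` (we regard `G` as a
function of `(z, t)` written `G z t`). -/
structure IsWeakHolVF (d : ℝ≥0∞) (D : CanonicalDomainSystem d) (G : ℂ → ℝ → ℂ) : Prop where
  meas : ∀ z : ℂ, Measurable fun t : {t : ℝ // 0 ≤ t ∧ z ∈ stdAnnulus (D.r t)} => G z t.1
  holo : ∀ t : ℝ, 0 ≤ t → DifferentiableOn ℂ (fun z => G z t) (stdAnnulus (D.r t))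
  bound : ∀ K : Set (ℂ × ℝ), IsCompact K → K ⊆ vfDomain D →
    ∃ k : ℝ → ℝ, (∀ x, 0 ≤ k x) ∧ MemLp k d (volume.restrict (Prod.snd '' K)) ∧
      ∀ p ∈ K, ‖G p.1 p.2‖ ≤ k p.2

/-- `G` is semicomplete: for every initial condition the Carathéodory initial
value problem (in integral form) has a solution defined on all of `[s,∞)`. -/
def IsSemicomplete {d : ℝ≥0∞} (D : CanonicalDomainSystem d) (G : ℂ → ℝ → ℂ) : Prop :=
  ∀ s : ℝ, 0 ≤ s → ∀ z ∈ stdAnnulus (D.r s),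
    ∃ w : ℝ → ℂ, w s = z ∧ (∀ t : ℝ, s ≤ t → w t ∈ stdAnnulus (D.r t)) ∧
      ∀ t : ℝ, s ≤ t → w t = z + ∫ ξ in s..t, G (w ξ) ξ

/-- `γ` is a closed curve (parametrized by `[0,1]`) contained in `A`. -/
def IsClosedCurveIn (γ : ℝ → ℂ) (A : Set ℂ) : Prop :=
  ContinuousOn γ (Icc 0 1) ∧ γ 0 = γ 1 ∧ ∀ t ∈ Icc (0:ℝ) 1, γ t ∈ A

/-- The closed curve `γ` has index (winding number) `n` about the point `w`,
expressed via a continuous logarithm of `γ - w`. -/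
def HasWindingNumber (γ : ℝ → ℂ) (w : ℂ) (n : ℤ) : Prop :=
  ∃ g : ℝ → ℂ, ContinuousOn g (Icc 0 1) ∧
    (∀ t ∈ Icc (0:ℝ) 1, γ t - w = Complex.exp (g t)) ∧
    g 1 - g 0 = 2 * Real.pi * Complex.I * n

/-- `I(f ∘ γ) = I(γ)` for every closed curve `γ` in `A`: `f` preserves the
index about the origin of closed curves in `A`. -/
def PreservesWinding (f : ℂ → ℂ) (A : Set ℂ) : Prop :=
  ∀ γ : ℝ → ℂ, IsClosedCurveIn γ A → ∀ n : ℤ,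
    (HasWindingNumber γ 0 n ↔ HasWindingNumber (fun t => f (γ t)) 0 n)

/-- The Loewner chain `f` is associated with the evolution family `φ`:
`f_s = f_t ∘ φ_{s,t}`. -/
def AssociatedLC {d : ℝ≥0∞} (D : CanonicalDomainSystem d) (f : ℝ → ℂ → ℂ)
    (φ : ℝ → ℝ → ℂ → ℂ) : Prop :=
  ∀ s t : ℝ, 0 ≤ s → s ≤ t → ∀ z ∈ stdAnnulus (D.r s), f s z = f t (φ s t z)

/-- The union `⋃_{t ≥ 0} f_t(D_t)` of the ranges of a Loewner chain. -/
def chainUnion {d : ℝ≥0∞} (D : CanonicalDomainSystem d) (f : ℝ → ℂ → ℂ) : Set ℂ :=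
  ⋃ t ∈ Ici (0:ℝ), f t '' stdAnnulus (D.r t)

/-- The evolution family `φ` has Loewner range `Ω`, i.e. there is an associated
Loewner chain, preserving winding numbers, whose union of ranges is `Ω`.
(Taking `Ω = 𝔸_ρ`, `𝔻*`, `ℂ ∖ cl 𝔻`, `ℂ*`, this defines the conformal types
I, II, III, IV respectively.) -/
def HasConformalType {d : ℝ≥0∞} (D : CanonicalDomainSystem d) (φ : ℝ → ℝ → ℂ → ℂ)
    (Ω : Set ℂ) : Prop :=
  ∃ f : ℝ → ℂ → ℂ, IsLoewnerChain d D f ∧ AssociatedLC D f φ ∧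
    (∀ t : ℝ, 0 ≤ t → PreservesWinding (f t) (stdAnnulus (D.r t))) ∧
    chainUnion D f = Ω

/-- `φ s t → 0` as `t → +∞`, uniformly on compact subsets of `D_s`. -/
def ConvergesToZeroOnCompacta {d : ℝ≥0∞} (D : CanonicalDomainSystem d)
    (φ : ℝ → ℝ → ℂ → ℂ) (s : ℝ) : Prop :=
  ∀ K : Set ℂ, IsCompact K → K ⊆ stdAnnulus (D.r s) →
    TendstoUniformlyOn (fun t z => φ s t z) (fun _ => 0) atTop K

/-- `N(f)`: the free term of the Laurent expansion of `f`, holomorphic on the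
annulus `𝔸_r`, computed as a mean value over the circle of radius `(1+r)/2`. -/
def freeTerm (r : ℝ) (f : ℂ → ℂ) : ℂ :=
  (2 * Real.pi : ℂ)⁻¹ *
    ∫ θ in (0:ℝ)..(2 * Real.pi), f ((((1 + r) / 2 : ℝ) : ℂ) * Complex.exp (θ * Complex.I))

/-- The Villat kernel `K_r`. -/
def villatKernel (r : ℝ) (z : ℂ) : ℂ :=
  (1 + z) / (1 - z) +
    ∑' ν : ℕ,
      ((1 + (r : ℂ) ^ (2 * (ν + 1)) * z) / (1 - (r : ℂ) ^ (2 * (ν + 1)) * z) +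
        (1 + z / (r : ℂ) ^ (2 * (ν + 1))) / (1 - z / (r : ℂ) ^ (2 * (ν + 1))))

/-- The class `V_r`: for `r ∈ (0,1)`, holomorphic functions on `𝔸_r` given by
the Villat-kernel representation with a pair of positive Borel measures on the
unit circle of total mass one; for `r = 0`, the (normalized) Carathéodory class
on the unit disk. -/
def MemClassV (r : ℝ) (p : ℂ → ℂ) : Prop :=
  (r = 0 →
    DifferentiableOn ℂ p (ball (0:ℂ) 1) ∧ p 0 = 1 ∧ ∀ z ∈ ball (0:ℂ) 1, 0 < (p z).re) ∧
  (r ≠ 0 →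
    DifferentiableOn ℂ p (stdAnnulus r) ∧
    ∃ μ₁ μ₂ : Measure ℂ,
      μ₁ {ξ : ℂ | ‖ξ‖ ≠ 1} = 0 ∧ μ₂ {ξ : ℂ | ‖ξ‖ ≠ 1} = 0 ∧
      μ₁ univ + μ₂ univ = 1 ∧
      ∀ z ∈ stdAnnulus r,
        p z = (∫ ξ, villatKernel r (z / ξ) ∂μ₁) +
          ∫ ξ, (1 - villatKernel r ((r : ℂ) * ξ / z)) ∂μ₂)

/-!
An injective holomorphic map has nonvanishing derivative (otherwise `F - F w` is locally the
`n`-th power, `n ≥ 2`, of a local coordinate at `w`), so the holomorphic inverse function theorem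
makes `φ s t = (f t)⁻¹ ∘ f s` holomorphic.

For (EF3) fix `z` and a parameter point `(s₀, t₀)`, and let `w₀ = φ s₀ t₀ z`. A closed disc about
`w₀` lies in `D_{t₀}`, hence, `ω ∘ r` being continuous, in `D_t` for all `t ≥ 0` near `t₀`; so
(LC3) applies to it on an interval `[S', T]` containing a neighbourhood of `t₀` in `[S, T]`.
For `t` near `t₀`, `f t` is then uniformly close to `f t₀` on the disc, so by the Cauchy
estimates it is uniformly bi-Lipschitz on a smaller disc `B` whose image covers a fixed
neighbourhood of `f s₀ z`. Hence `φ s u z, φ s t z ∈ B` for `(s, u), (s, t)` near `(s₀, t₀)`, and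
`‖φ s u z - φ s t z‖ ≤ C ‖f t (φ s u z) - f u (φ s u z)‖ ≤ C ∫ ξ in u..t, k ξ`.
Finitely many such local kernels cover the compact triangle `S ≤ s ≤ t ≤ T`; their sum works on
all short intervals, and chaining short intervals gives the bound on `[u, t]`.
-/

theorem AnalyticAt.exists_pow_eq {g : ℂ → ℂ} {w : ℂ} (hg : AnalyticAt ℂ g w) (hgw : g w ≠ 0)
    {n : ℕ} (hn : n ≠ 0) : ∃ h : ℂ → ℂ, AnalyticAt ℂ h w ∧ ∀ z, h z ^ n = g z := by
  obtain ⟨β, hβ⟩ := IsAlgClosed.exists_pow_nat_eq (g w) (Nat.pos_of_ne_zero hn)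
  refine ⟨fun z => β * (g z / g w) ^ (n⁻¹ : ℂ), ?_, fun z => ?_⟩
  · exact analyticAt_const.mul (hg.div_const.cpow analyticAt_const (by simp [hgw]))
  · rw [mul_pow, Complex.cpow_nat_inv_pow _ hn, hβ]
    field_simp

theorem not_injOn_of_eventuallyEq_pow {F H : ℂ → ℂ} {w c : ℂ} {U : Set ℂ} {n : ℕ}
    (hU : U ∈ 𝓝 w) (hH : HasStrictDerivAt H c w) (hc : c ≠ 0) (hHw : H w = 0) (hn : 2 ≤ n)
    (hFH : ∀ᶠ z in 𝓝 w, F z - F w = H z ^ n) : ¬ InjOn F U := by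
  intro hinj
  -- For a primitive `n`-th root of unity `ζ`, small `y ≠ 0` and `ζ y` have distinct
  -- `H`-preimages at which `F - F w = H ^ n` takes the same value.
  set V := {z | z ∈ U ∧ F z - F w = H z ^ n}
  have hV : H '' V ∈ 𝓝 0 := by
    rw [← hHw, ← hH.map_nhds_eq hc]
    exact image_mem_map (inter_mem hU hFH)
  obtain ⟨ζ, hζ⟩ : ∃ ζ : ℂ, IsPrimitiveRoot ζ n := ⟨_, Complex.isPrimitiveRoot_exp n (by omega)⟩
  have hW : H '' V ∩ (ζ * ·) ⁻¹' (H '' V) ∈ 𝓝 0 :=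
    inter_mem hV ((continuous_const_mul ζ).tendsto' 0 0 (mul_zero ζ) hV)
  obtain ⟨y, ⟨⟨x₁, hx₁, rfl⟩, ⟨x₂, hx₂, hx₂y⟩⟩, hy⟩ :=
    ((eventually_nhdsWithin_of_eventually_nhds hW).and
      (self_mem_nhdsWithin : {y : ℂ | y ≠ 0} ∈ 𝓝[≠] 0)).exists
  have hx : x₁ = x₂ := hinj hx₁.1 hx₂.1 <| by
    rw [← sub_left_inj, hx₁.2, hx₂.2, hx₂y, mul_pow, hζ.pow_eq_one, one_mul]
  rw [hx] at hy hx₂y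
  exact hζ.ne_one (by omega) (mul_right_cancel₀ hy (by rw [one_mul]; exact hx₂y.symm))

theorem AnalyticAt.deriv_ne_zero_of_injOn {F : ℂ → ℂ} {w : ℂ} {U : Set ℂ}
    (hF : AnalyticAt ℂ F w) (hU : U ∈ 𝓝 w) (hinj : InjOn F U) : deriv F w ≠ 0 := by
  intro hder
  have hFw : AnalyticAt ℂ (F · - F w) w := hF.sub analyticAt_const
  have hfin : analyticOrderAt (F · - F w) w ≠ ⊤ := by
    intro htop
    have hloc : ∀ᶠ z in 𝓝 w, z = w := by
      filter_upwards [analyticOrderAt_eq_top.mp htop, hU] with z hz hzU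
      exact hinj hzU (mem_of_mem_nhds hU) (sub_eq_zero.mp hz)
    obtain ⟨z, hz, hzw⟩ := ((eventually_nhdsWithin_of_eventually_nhds hloc).and
      (self_mem_nhdsWithin : {z : ℂ | z ≠ w} ∈ 𝓝[≠] w)).exists
    exact hzw hz
  obtain ⟨n, hn⟩ := ENat.ne_top_iff_exists.mp hfin
  have hn2 : 2 ≤ n := by
    have hd : analyticOrderAt (deriv F) w ≠ 0 := analyticOrderAt_ne_zero.mpr ⟨hF.deriv, hder⟩
    have := hF.analyticOrderAt_deriv_add_one
    rw [← hn] at this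
    have h1 : (1 : ℕ∞) + 1 ≤ analyticOrderAt (deriv F) w + 1 := by
      gcongr
      exact Order.one_le_iff_ne_zero.mpr hd
    rw [this] at h1
    exact_mod_cast h1
  obtain ⟨g, hg, hgw, hFg⟩ := hFw.analyticOrderAt_eq_natCast.mp hn.symm
  obtain ⟨h, hh, hhg⟩ := hg.exists_pow_eq hgw (n := n) (by omega)
  have hhw : h w ≠ 0 := fun h0 => hgw (by rw [← hhg, h0, zero_pow (by omega)])
  have hH : HasStrictDerivAt (fun z => (z - w) * h z) (h w) w := by
    have hlin : HasStrictDerivAt (fun z : ℂ => z - w) 1 w := (hasStrictDerivAt_id w).sub_const w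
    simpa using hlin.fun_mul hh.hasStrictDerivAt
  refine not_injOn_of_eventuallyEq_pow hU hH hhw (by simp) hn2 ?_ hinj
  filter_upwards [hFg] with z hz
  rw [hz, smul_eq_mul, mul_pow, hhg]

theorem Convex.mul_norm_sub_le_norm_image_sub {F : ℂ → ℂ} {s : Set ℂ} (hs : Convex ℝ s)
    (hF : ∀ x ∈ s, DifferentiableAt ℂ F x) {c : ℂ} {C : ℝ}
    (hder : ∀ x ∈ s, ‖deriv F x - c‖ ≤ C) {x y : ℂ} (hx : x ∈ s) (hy : y ∈ s) :
    (‖c‖ - C) * ‖x - y‖ ≤ ‖F x - F y‖ := by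
  have hlin : ∀ z ∈ s, HasDerivWithinAt (fun z => F z - c * z) (deriv F z - c) s z :=
    fun z hz => ((hF z hz).hasDerivAt.sub
      (by simpa using (hasDerivAt_id z).const_mul c)).hasDerivWithinAt
  have hrem := hs.norm_image_sub_le_of_norm_hasDerivWithin_le hlin hder hy hx
  have hsplit : F x - F y = c * (x - y) + ((F x - c * x) - (F y - c * y)) := by ring
  calc (‖c‖ - C) * ‖x - y‖ = ‖c * (x - y)‖ - C * ‖x - y‖ := by rw [norm_mul]; ring
    _ ≤ ‖c * (x - y)‖ - ‖(F x - c * x) - (F y - c * y)‖ := by linarith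
    _ ≤ ‖F x - F y‖ := by rw [hsplit]; exact norm_sub_le_norm_add _ _

theorem norm_deriv_sub_le_of_norm_sub_le {F G : ℂ → ℂ} {w : ℂ} {ε η : ℝ} (hε : 0 < ε)
    (hF : DifferentiableOn ℂ F (closedBall w (2 * ε)))
    (hG : DifferentiableOn ℂ G (closedBall w (2 * ε)))
    (hFG : ∀ x ∈ closedBall w (2 * ε), ‖F x - G x‖ ≤ η) {x : ℂ} (hx : x ∈ closedBall w ε) :
    ‖deriv F x - deriv G x‖ ≤ η / ε := by
  have hball : closedBall x ε ⊆ closedBall w (2 * ε) :=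
    closedBall_subset_closedBall' (by linarith [mem_closedBall.mp hx])
  have hxw : closedBall w (2 * ε) ∈ 𝓝 x :=
    closedBall_mem_nhds_of_mem ((mem_closedBall.mp hx).trans_lt (by linarith))
  rw [← deriv_fun_sub (hF.differentiableAt hxw) (hG.differentiableAt hxw)]
  exact Complex.norm_deriv_le_of_forall_mem_sphere_norm_le hε ((hF.sub hG).diffContOnCl_ball hball)
    fun y hy => hFG y (hball (sphere_subset_closedBall hy))

theorem ball_subset_image_closedBall_of_mul_norm_sub_le {F : ℂ → ℂ} {w : ℂ} {ε m : ℝ}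
    (hε : 0 < ε) (hm : 0 < m) (hF : DiffContOnCl ℂ F (ball w ε))
    (hlow : ∀ x ∈ closedBall w ε, m * ‖x - w‖ ≤ ‖F x - F w‖) :
    ball (F w) (m * ε / 2) ⊆ F '' closedBall w ε := by
  have hsphere : ∀ x ∈ sphere w ε, m * ε ≤ ‖F x - F w‖ := fun x hx => by
    simpa [mem_sphere_iff_norm.mp hx] using hlow x (sphere_subset_closedBall hx)
  have hne : ∃ᶠ z in 𝓝 w, F z ≠ F w := by
    refine (Eventually.frequently (f := 𝓝[≠] w) ?_).filter_mono nhdsWithin_le_nhds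
    filter_upwards [mem_nhdsWithin_of_mem_nhds (closedBall_mem_nhds w hε), self_mem_nhdsWithin]
      with z hz hzw hFz
    have := hlow z hz
    rw [hFz, sub_self, norm_zero] at this
    exact hzw (sub_eq_zero.mp (norm_eq_zero.mp (by nlinarith [norm_nonneg (z - w)])))
  exact hF.ball_subset_image_closedBall hε hsphere hne

theorem exists_perturbation_stable_of_deriv_ne_zero {F₀ : ℂ → ℂ} {U : Set ℂ} (hU : IsOpen U)
    (hF₀ : DifferentiableOn ℂ F₀ U) {w₀ : ℂ} (hw₀ : w₀ ∈ U) (hc : deriv F₀ w₀ ≠ 0) :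
    ∃ ε > 0, ∃ η > 0, ∃ C ≥ 0, closedBall w₀ (2 * ε) ⊆ U ∧
      ∀ F : ℂ → ℂ, DifferentiableOn ℂ F (closedBall w₀ (2 * ε)) →
        (∀ x ∈ closedBall w₀ (2 * ε), ‖F x - F₀ x‖ ≤ η) →
        (∀ x ∈ closedBall w₀ ε, ∀ y ∈ closedBall w₀ ε, ‖x - y‖ ≤ C * ‖F x - F y‖) ∧
        ball (F₀ w₀) η ⊆ F '' closedBall w₀ ε := by
  set c := deriv F₀ w₀
  have hc' : 0 < ‖c‖ := norm_pos_iff.mpr hc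
  have hcont : ContinuousAt (deriv F₀) w₀ :=
    (hF₀.analyticAt (hU.mem_nhds hw₀)).deriv.continuousAt
  obtain ⟨ρ, hρ, hρU⟩ := Metric.eventually_nhds_iff.mp ((hU.eventually_mem hw₀).and
    (hcont.eventually (ball_mem_nhds c (by positivity : 0 < ‖c‖ / 4))))
  set ε := ρ / 3 with hερ
  have hε : 0 < ε := by positivity
  have hU₂ : ∀ x ∈ closedBall w₀ (2 * ε), x ∈ U ∧ ‖deriv F₀ x - c‖ < ‖c‖ / 4 := fun x hx => by
    simpa [dist_eq_norm] using hρU ((mem_closedBall.mp hx).trans_lt (by linarith))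
  have hsub : closedBall w₀ ε ⊆ closedBall w₀ (2 * ε) := closedBall_subset_closedBall (by linarith)
  refine ⟨ε, hε, ‖c‖ * ε / 8, by positivity, 2 / ‖c‖, by positivity, fun x hx => (hU₂ x hx).1,
    fun F hF hFη => ?_⟩
  have hder : ∀ x ∈ closedBall w₀ ε, ‖deriv F x - c‖ ≤ ‖c‖ / 2 := fun x hx =>
    calc ‖deriv F x - c‖ ≤ ‖deriv F x - deriv F₀ x‖ + ‖deriv F₀ x - c‖ :=
          norm_sub_le_norm_sub_add_norm_sub _ _ _
      _ ≤ ‖c‖ * ε / 8 / ε + ‖c‖ / 4 := add_le_add (norm_deriv_sub_le_of_norm_sub_le hε hF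
          (hF₀.mono fun y hy => (hU₂ y hy).1) hFη hx) (hU₂ x (hsub hx)).2.le
      _ ≤ ‖c‖ / 2 := by rw [mul_div_right_comm, mul_div_cancel_right₀ _ hε.ne']; linarith
  have hlow : ∀ x ∈ closedBall w₀ ε, ∀ y ∈ closedBall w₀ ε, ‖c‖ / 2 * ‖x - y‖ ≤ ‖F x - F y‖ :=
    fun x hx y hy => by
      have := (convex_closedBall w₀ ε).mul_norm_sub_le_norm_image_sub (fun z hz =>
        hF.differentiableAt (closedBall_mem_nhds_of_mem
          ((mem_closedBall.mp hz).trans_lt (by linarith)))) hder hx hy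
      linarith
  have hw₀ε : w₀ ∈ closedBall w₀ ε := mem_closedBall_self hε.le
  refine ⟨fun x hx y hy => ?_, (ball_subset_ball' ?_).trans
    (ball_subset_image_closedBall_of_mul_norm_sub_le hε (half_pos hc') (hF.diffContOnCl_ball hsub)
      fun x hx => hlow x hx w₀ hw₀ε)⟩
  · rw [div_mul_eq_mul_div, le_div_iff₀' hc']
    linarith [hlow x hx y hy]
  · have := hFη w₀ (hsub hw₀ε)
    rw [dist_comm, dist_eq_norm]
    linarith

theorem DifferentiableOn.of_injOn_comp {F G ψ : ℂ → ℂ} {U V : Set ℂ} (hU : IsOpen U)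
    (hV : IsOpen V) (hF : DifferentiableOn ℂ F V) (hinj : InjOn F V)
    (hG : DifferentiableOn ℂ G U) (hψ : MapsTo ψ U V) (hFψ : ∀ z ∈ U, F (ψ z) = G z) :
    DifferentiableOn ℂ ψ U := by
  intro z hz
  have hFa : AnalyticAt ℂ F (ψ z) := hF.analyticAt (hV.mem_nhds (hψ hz))
  have hc := hFa.deriv_ne_zero_of_injOn (hV.mem_nhds (hψ hz)) hinj
  set r := hFa.hasStrictDerivAt.localInverse F _ _ hc
  have hr : AnalyticAt ℂ r (F (ψ z)) := hFa.analyticAt_localInverse hc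
  have hrψ : r (F (ψ z)) = ψ z := HasStrictFDerivAt.localInverse_apply_image ..
  have hGz : Tendsto G (𝓝 z) (𝓝 (F (ψ z))) :=
    hFψ z hz ▸ (hG.differentiableAt (hU.mem_nhds hz)).continuousAt
  have hrV : ∀ᶠ y in 𝓝 (F (ψ z)), r y ∈ V :=
    hr.continuousAt.eventually_mem (by rw [hrψ]; exact hV.mem_nhds (hψ hz))
  have hψr : ψ =ᶠ[𝓝 z] r ∘ G := by
    have hFr : ∀ᶠ y in 𝓝 (F (ψ z)), F (r y) = y := HasStrictDerivAt.eventually_right_inverse ..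
    filter_upwards [hGz.eventually (hrV.and hFr), hU.mem_nhds hz] with y ⟨hyV, hy⟩ hyU
    exact hinj (hψ hyU) hyV (by rw [hFψ y hyU, Function.comp_apply, hy])
  refine (hψr.differentiableAt_iff.mpr ?_).differentiableWithinAt
  rw [hFψ z hz] at hr
  exact hr.differentiableAt.comp z (hG.differentiableAt (hU.mem_nhds hz))

theorem intervalIntegrable_of_integrableOn_Icc {k : ℝ → ℝ} {A B a b : ℝ}
    (hk : IntegrableOn k (Icc A B)) (ha : a ∈ Icc A B) (hb : b ∈ Icc A B) :
    IntervalIntegrable k volume a b :=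
  (hk.mono_set (uIcc_subset_Icc ha hb)).intervalIntegrable

theorem tendstoUniformlyOn_of_norm_sub_le_integral {X E : Type*} [NormedAddCommGroup E]
    {g : ℝ → X → E} {K : Set X} {k : ℝ → ℝ} {A B t₀ : ℝ} (hk : IntegrableOn k (Icc A B))
    (ht₀ : t₀ ∈ Icc A B)
    (hg : ∀ x ∈ K, ∀ a b, A ≤ a → a ≤ b → b ≤ B → ‖g a x - g b x‖ ≤ ∫ ξ in a..b, k ξ) :
    TendstoUniformlyOn g (g t₀) (𝓝[Icc A B] t₀) K := by
  have hAB : A ≤ B := ht₀.1.trans ht₀.2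
  have hA : A ∈ Icc A B := left_mem_Icc.mpr hAB
  set P := fun t => ∫ ξ in A..t, k ξ
  have hP : ContinuousWithinAt P (Icc A B) t₀ := by
    have := intervalIntegral.continuousOn_primitive_interval (μ := volume) (by rwa [uIcc_of_le hAB])
    rw [uIcc_of_le hAB] at this
    exact this t₀ ht₀
  have hPsub : ∀ a ∈ Icc A B, ∀ b ∈ Icc A B, ∫ ξ in a..b, k ξ = P b - P a := fun a ha b hb =>
    (intervalIntegral.integral_interval_sub_left (intervalIntegrable_of_integrableOn_Icc hk hA hb)
      (intervalIntegrable_of_integrableOn_Icc hk hA ha)).symm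
  rw [Metric.tendstoUniformlyOn_iff]
  intro e he
  filter_upwards [hP (Metric.ball_mem_nhds _ he), self_mem_nhdsWithin] with t ht htI x hx
  rw [mem_preimage, mem_ball, Real.dist_eq, abs_lt] at ht
  rw [dist_eq_norm]
  rcases le_total t₀ t with h | h
  · calc ‖g t₀ x - g t x‖ ≤ P t - P t₀ := hPsub t₀ ht₀ t htI ▸ hg x hx t₀ t ht₀.1 h htI.2
      _ < e := by linarith
  · calc ‖g t₀ x - g t x‖ = ‖g t x - g t₀ x‖ := norm_sub_rev _ _
      _ ≤ P t₀ - P t := hPsub t htI t₀ ht₀ ▸ hg x hx t t₀ htI.1 h ht₀.2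
      _ < e := by linarith

theorem norm_sub_le_integral_of_local {E : Type*} [NormedAddCommGroup E] {g : ℝ → E}
    {k : ℝ → ℝ} {a b δ : ℝ} (hab : a ≤ b) (hδ : 0 < δ) (hk : IntegrableOn k (Icc a b))
    (hloc : ∀ u t, a ≤ u → u ≤ t → t ≤ b → t - u < δ → ‖g u - g t‖ ≤ ∫ ξ in u..t, k ξ) :
    ‖g a - g b‖ ≤ ∫ ξ in a..b, k ξ := by
  suffices H : ∀ n : ℕ, ∀ u, a ≤ u → u ≤ b → b - u < n * (δ / 2) →
      ‖g u - g b‖ ≤ ∫ ξ in u..b, k ξ by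
    obtain ⟨n, hn⟩ := exists_nat_gt ((b - a) / (δ / 2))
    exact H n a le_rfl hab (by rwa [div_lt_iff₀ (by positivity)] at hn)
  intro n
  induction n with
  | zero => intro u _ hub h; simp at h; linarith
  | succ n ih =>
    intro u hau hub hn
    by_cases hsmall : b - u < δ
    · exact hloc u b hau hub le_rfl hsmall
    have hb : b ∈ Icc a b := right_mem_Icc.mpr hab
    have hu : u ∈ Icc a b := ⟨hau, hub⟩
    have hv : u + δ / 2 ∈ Icc a b := ⟨by linarith, by linarith⟩
    calc ‖g u - g b‖ ≤ ‖g u - g (u + δ / 2)‖ + ‖g (u + δ / 2) - g b‖ :=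
          norm_sub_le_norm_sub_add_norm_sub _ _ _
      _ ≤ (∫ ξ in u..u + δ / 2, k ξ) + ∫ ξ in u + δ / 2..b, k ξ := by
        gcongr
        · exact hloc _ _ hau (by linarith) hv.2 (by linarith)
        · exact ih _ hv.1 hv.2 (by push_cast at hn; linarith)
      _ = ∫ ξ in u..b, k ξ := intervalIntegral.integral_add_adjacent_intervals
        (intervalIntegrable_of_integrableOn_Icc hk hu hv)
        (intervalIntegrable_of_integrableOn_Icc hk hv hb)

theorem exists_integral_bound_of_local {E : Type*} [NormedAddCommGroup E] {Φ : ℝ → ℝ → E}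
    {d : ℝ≥0∞} (hd : 1 ≤ d) {S T : ℝ}
    (hloc : ∀ s₀ t₀, S ≤ s₀ → s₀ ≤ t₀ → t₀ ≤ T → ∃ N ∈ 𝓝 (s₀, t₀), ∃ k : ℝ → ℝ,
      (∀ x, 0 ≤ k x) ∧ MemLp k d (volume.restrict (Icc S T)) ∧
      ∀ s u t, (s, u) ∈ N → (s, t) ∈ N → S ≤ s → s ≤ u → u ≤ t → t ≤ T →
        ‖Φ s u - Φ s t‖ ≤ ∫ ξ in u..t, k ξ) :
    ∃ k : ℝ → ℝ, (∀ x, 0 ≤ k x) ∧ MemLp k d (volume.restrict (Icc S T)) ∧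
      ∀ s u t, S ≤ s → s ≤ u → u ≤ t → t ≤ T → ‖Φ s u - Φ s t‖ ≤ ∫ ξ in u..t, k ξ := by
  choose! N hN k hk₀ hkLp hkbd using hloc
  set Δ : Set (ℝ × ℝ) := (Icc S T ×ˢ Icc S T) ∩ {p | p.1 ≤ p.2}
  have hΔ : IsCompact Δ :=
    (isCompact_Icc.prod isCompact_Icc).inter_right (isClosed_le continuous_fst continuous_snd)
  obtain ⟨I, hIΔ, hI⟩ := hΔ.elim_nhds_subcover (fun p => interior (N p.1 p.2))
    fun p ⟨⟨h₁, h₂⟩, h₃⟩ => interior_mem_nhds.mpr (hN p.1 p.2 h₁.1 h₃ h₂.2)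
  obtain ⟨δ, hδ, hleb⟩ := lebesgue_number_lemma_of_metric hΔ
    (c := fun p : I => interior (N p.1.1 p.1.2)) (fun _ => isOpen_interior)
    (fun q hq => by simpa using hI hq)
  have hkI : ∀ p ∈ I, ∀ x, 0 ≤ k p.1 p.2 x ∧ MemLp (k p.1 p.2) d (volume.restrict (Icc S T)) :=
    fun p hp x => by
      obtain ⟨⟨h₁, h₂⟩, h₃⟩ := hIΔ p hp
      exact ⟨hk₀ p.1 p.2 h₁.1 h₃ h₂.2 x, hkLp p.1 p.2 h₁.1 h₃ h₂.2⟩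
  set K := fun ξ => ∑ p ∈ I, k p.1 p.2 ξ
  have hKLp : MemLp K d (volume.restrict (Icc S T)) :=
    memLp_finsetSum I fun p hp => (hkI p hp 0).2
  have hKint : IntegrableOn K (Icc S T) := hKLp.integrable hd
  refine ⟨K, fun x => Finset.sum_nonneg fun p hp => (hkI p hp x).1, hKLp,
    fun s u t hSs hsu hut htT => ?_⟩
  have hu : u ∈ Icc S T := ⟨hSs.trans hsu, hut.trans htT⟩
  have ht : t ∈ Icc S T := ⟨hu.1.trans hut, htT⟩
  refine norm_sub_le_integral_of_local hut hδ (hKint.mono_set (Icc_subset_Icc hu.1 ht.2))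
    fun u' t' huu' hu't' ht't hδ' => ?_
  have hu' : u' ∈ Icc S T := ⟨hu.1.trans huu', hu't'.trans (ht't.trans ht.2)⟩
  have ht' : t' ∈ Icc S T := ⟨hu'.1.trans hu't', ht't.trans ht.2⟩
  obtain ⟨⟨p, hpI⟩, hp⟩ := hleb (s, u') ⟨⟨⟨hSs, (hsu.trans huu').trans hu'.2⟩, hu'⟩, hsu.trans huu'⟩
  have hmem : ∀ v, |v - u'| < δ → (s, v) ∈ N p.1 p.2 := fun v hv =>
    interior_subset (hp (by simpa [Prod.dist_eq, Real.dist_eq, hδ] using hv))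
  obtain ⟨⟨h₁, h₂⟩, h₃⟩ := hIΔ p hpI
  calc ‖Φ s u' - Φ s t'‖ ≤ ∫ ξ in u'..t', k p.1 p.2 ξ :=
        hkbd p.1 p.2 h₁.1 h₃ h₂.2 s u' t' (hmem u' (by simpa using hδ))
          (hmem t' (by rwa [abs_of_nonneg (by linarith)])) hSs (hsu.trans huu') hu't' ht'.2
    _ ≤ ∫ ξ in u'..t', K ξ := by
        refine intervalIntegral.integral_mono_on hu't'
          (intervalIntegrable_of_integrableOn_Icc (((hkI p hpI 0).2).integrable hd) hu' ht')
          (intervalIntegrable_of_integrableOn_Icc hKint hu' ht') fun x _ => ?_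
        exact Finset.single_le_sum (fun q hq => (hkI q hq x).1) hpI

theorem isOpen_stdAnnulus (r : ℝ) : IsOpen (stdAnnulus r) :=
  (isOpen_lt continuous_const continuous_norm).inter (isOpen_lt continuous_norm continuous_const)

theorem omegaFun_strictMonoOn : StrictMonoOn omegaFun (Ico 0 1) := by
  intro a ha b hb hab
  have hb0 : 0 < b := ha.1.trans_lt hab
  have hlogb : Real.log b < 0 := Real.log_neg hb0 hb.2
  simp only [omegaFun, hb0.ne', if_false, neg_div, ← div_neg]
  split_ifs with ha0
  · exact div_pos Real.pi_pos (neg_pos.mpr hlogb)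
  · exact div_lt_div_of_pos_left Real.pi_pos (neg_pos.mpr hlogb)
      (neg_lt_neg (Real.log_lt_log (lt_of_le_of_ne ha.1 (Ne.symm ha0)) hab))

theorem ACd.continuousOn_Icc {d : ℝ≥0∞} (hd : 1 ≤ d) {F : ℝ → ℝ} (hF : ACd d F) {T : ℝ}
    (hT : 0 < T) : ContinuousOn F (Icc 0 T) := by
  obtain ⟨g, hg, hFg⟩ := hF
  have hprim := intervalIntegral.continuousOn_primitive_interval (a := 0) (b := T) (μ := volume)
    (f := g) (by rw [uIcc_of_le hT.le]; exact (hg T hT).integrable hd)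
  rw [uIcc_of_le hT.le] at hprim
  refine ((continuousOn_const (c := F 0)).add hprim).congr fun t ht => ?_
  simp only [Pi.add_apply, ← hFg 0 t le_rfl ht.1]
  ring

namespace CanonicalDomainSystem

variable {d : ℝ≥0∞} (D : CanonicalDomainSystem d)

theorem r_le_of_le {s t : ℝ} (hs : 0 ≤ s) (hst : s ≤ t) : D.r t ≤ D.r s :=
  (omegaFun_strictMonoOn.le_iff_le ⟨D.r_nonneg t (hs.trans hst), D.r_lt_one t (hs.trans hst)⟩
    ⟨D.r_nonneg s hs, D.r_lt_one s hs⟩).mp (D.omega_anti hs hst)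

theorem stdAnnulus_subset {s t : ℝ} (hs : 0 ≤ s) (hst : s ≤ t) :
    stdAnnulus (D.r s) ⊆ stdAnnulus (D.r t) :=
  fun _ hz => ⟨(D.r_le_of_le hs hst).trans_lt hz.1, hz.2⟩

theorem exists_forall_r_lt (hd : 1 ≤ d) {t₀ c : ℝ} (ht₀ : 0 ≤ t₀) (hc : D.r t₀ < c) :
    ∃ δ > 0, ∀ t, 0 ≤ t → t₀ - δ ≤ t → D.r t < c := by
  by_cases hc1 : 1 ≤ c
  · exact ⟨1, one_pos, fun t ht _ => (D.r_lt_one t ht).trans_le hc1⟩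
  have hr₀ : D.r t₀ ∈ Ico 0 1 := ⟨D.r_nonneg t₀ ht₀, D.r_lt_one t₀ ht₀⟩
  have hcI : c ∈ Ico 0 1 := ⟨hr₀.1.trans hc.le, not_le.mp hc1⟩
  have hcont := (D.omega_ACd.continuousOn_Icc hd (by linarith : 0 < t₀ + 1)) t₀ ⟨ht₀, by linarith⟩
  obtain ⟨δ, hδ, hδω⟩ := Metric.mem_nhdsWithin_iff.mp
    (hcont (Iio_mem_nhds (omegaFun_strictMonoOn hr₀ hcI hc)))
  refine ⟨δ / 2, by positivity, fun t ht htδ => ?_⟩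
  rcases le_total t t₀ with htt₀ | htt₀
  · have hω : omegaFun (D.r t) < omegaFun c := hδω ⟨by
      rw [mem_ball, Real.dist_eq, abs_lt]; constructor <;> linarith, ht, by linarith⟩
    exact (omegaFun_strictMonoOn.lt_iff_lt ⟨D.r_nonneg t ht, D.r_lt_one t ht⟩ hcI).mp hω
  · exact (D.r_le_of_le ht₀ htt₀).trans_lt hc

theorem exists_forall_subset_stdAnnulus (hd : 1 ≤ d) {t₀ : ℝ} (ht₀ : 0 ≤ t₀) {K : Set ℂ}
    (hK : IsCompact K) (hKt₀ : K ⊆ stdAnnulus (D.r t₀)) :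
    ∃ δ > 0, ∀ t, 0 ≤ t → t₀ - δ ≤ t → K ⊆ stdAnnulus (D.r t) := by
  rcases K.eq_empty_or_nonempty with rfl | hne
  · exact ⟨1, one_pos, fun _ _ _ => empty_subset _⟩
  obtain ⟨x₀, hx₀, hmin⟩ := hK.exists_isMinOn hne continuous_norm.continuousOn
  obtain ⟨δ, hδ, hr⟩ := D.exists_forall_r_lt hd ht₀ (hKt₀ hx₀).1
  exact ⟨δ, hδ, fun t ht htδ x hx => ⟨(hr t ht htδ).trans_le (hmin hx), (hKt₀ hx).2⟩⟩

end CanonicalDomainSystem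

def IsChainTransition {d : ℝ≥0∞} (D : CanonicalDomainSystem d) (f : ℝ → ℂ → ℂ)
    (φ : ℝ → ℝ → ℂ → ℂ) : Prop :=
  ∀ s t : ℝ, 0 ≤ s → s ≤ t → ∀ z ∈ stdAnnulus (D.r s),
    φ s t z ∈ stdAnnulus (D.r t) ∧ f t (φ s t z) = f s z

namespace IsLoewnerChain

variable {d : ℝ≥0∞} {D : CanonicalDomainSystem d} {f : ℝ → ℂ → ℂ} {φ : ℝ → ℝ → ℂ → ℂ}

theorem transition_eq (hf : IsLoewnerChain d D f) (hφ : IsChainTransition D f φ) {s t : ℝ}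
    (hs : 0 ≤ s) (hst : s ≤ t) {z w : ℂ} (hz : z ∈ stdAnnulus (D.r s))
    (hw : w ∈ stdAnnulus (D.r t)) (hfw : f t w = f s z) : φ s t z = w :=
  hf.inj t (hs.trans hst) (hφ s t hs hst z hz).1 hw ((hφ s t hs hst z hz).2.trans hfw.symm)

theorem differentiableOn_transition (hf : IsLoewnerChain d D f) (hφ : IsChainTransition D f φ)
    {s t : ℝ} (hs : 0 ≤ s) (hst : s ≤ t) : DifferentiableOn ℂ (φ s t) (stdAnnulus (D.r s)) :=
  (hf.holo t (hs.trans hst)).of_injOn_comp (isOpen_stdAnnulus _) (isOpen_stdAnnulus _)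
    (hf.inj t (hs.trans hst)) (hf.holo s hs) (fun z hz => (hφ s t hs hst z hz).1)
    (fun z hz => (hφ s t hs hst z hz).2)

theorem eventually_norm_sub_lt (hd : 1 ≤ d) (hf : IsLoewnerChain d D f) {S T : ℝ} (hS : 0 ≤ S)
    {K : Set ℂ} (hK : IsCompact K) (hKS : K ⊆ stdAnnulus (D.r S)) {t₀ : ℝ} (ht₀ : t₀ ∈ Icc S T)
    {e : ℝ} (he : 0 < e) : ∀ᶠ t in 𝓝 t₀, t ∈ Icc S T → ∀ x ∈ K, ‖f t x - f t₀ x‖ < e := by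
  obtain ⟨k, -, hkLp, hk⟩ := hf.lc3 S T hS (ht₀.1.trans ht₀.2) K hK hKS
  have hunif := tendstoUniformlyOn_of_norm_sub_le_integral (hkLp.integrable hd) ht₀ hk
  rw [← eventually_nhdsWithin_iff]
  filter_upwards [Metric.tendstoUniformlyOn_iff.mp hunif e he] with t ht x hx
  simpa [dist_eq_norm, norm_sub_rev] using ht x hx

theorem exists_nhds_transition_antilipschitz (hd : 1 ≤ d) (hf : IsLoewnerChain d D f)
    (hφ : IsChainTransition D f φ) {S T : ℝ} (hS : 0 ≤ S) {z : ℂ}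
    (hz : z ∈ stdAnnulus (D.r S)) {s₀ t₀ : ℝ} (hs₀ : S ≤ s₀) (hst₀ : s₀ ≤ t₀) (ht₀ : t₀ ≤ T) :
    ∃ S' ∈ Icc S t₀, ∃ B : Set ℂ, IsCompact B ∧ B ⊆ stdAnnulus (D.r S') ∧ ∃ C ≥ 0,
      ∃ N ∈ 𝓝 (s₀, t₀), ∀ s v, (s, v) ∈ N → S ≤ s → s ≤ v → v ≤ T →
        S' ≤ v ∧ φ s v z ∈ B ∧ ∀ x ∈ B, ∀ y ∈ B, ‖x - y‖ ≤ C * ‖f v x - f v y‖ := by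
  have h0t₀ : 0 ≤ t₀ := (hS.trans hs₀).trans hst₀
  obtain ⟨hw₀, hfw₀⟩ := hφ s₀ t₀ (hS.trans hs₀) hst₀ z (D.stdAnnulus_subset hS hs₀ hz)
  set w₀ := φ s₀ t₀ z
  have hU := isOpen_stdAnnulus (D.r t₀)
  have hft₀ := hf.holo t₀ h0t₀
  obtain ⟨ε, hε, η, hη, C, hC, hB, hstable⟩ := exists_perturbation_stable_of_deriv_ne_zero hU hft₀
    hw₀ ((hft₀.analyticAt (hU.mem_nhds hw₀)).deriv_ne_zero_of_injOn (hU.mem_nhds hw₀)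
      (hf.inj t₀ h0t₀))
  have hεB : closedBall w₀ ε ⊆ closedBall w₀ (2 * ε) := closedBall_subset_closedBall (by linarith)
  obtain ⟨δ, hδ, hBt⟩ := D.exists_forall_subset_stdAnnulus hd h0t₀ (isCompact_closedBall _ _) hB
  set S' := max S (t₀ - δ)
  have hS' : 0 ≤ S' := hS.trans (le_max_left _ _)
  have hS't₀ : S' ≤ t₀ := max_le (hs₀.trans hst₀) (by linarith)
  have hBS' : ∀ t, S' ≤ t → closedBall w₀ (2 * ε) ⊆ stdAnnulus (D.r t) :=
    fun t ht => hBt t (hS'.trans ht) ((le_max_right _ _).trans ht)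
  have hfB := hf.eventually_norm_sub_lt hd hS' (isCompact_closedBall _ _) (hBS' S' le_rfl)
    ⟨hS't₀, ht₀⟩ hη
  have hfz := hf.eventually_norm_sub_lt hd hS isCompact_singleton (singleton_subset_iff.mpr hz)
    ⟨hs₀, hst₀.trans ht₀⟩ hη
  refine ⟨S', ⟨le_max_left _ _, hS't₀⟩, closedBall w₀ ε, isCompact_closedBall _ _,
    hεB.trans (hBS' S' le_rfl), C, hC, _,
    prod_mem_nhds hfz (inter_mem hfB (Ioi_mem_nhds (sub_lt_self t₀ hδ))), ?_⟩
  rintro s v ⟨hsN, hvN, hvδ⟩ hSs hsv hvT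
  have hS'v : S' ≤ v := max_le (hSs.trans hsv) hvδ.le
  obtain ⟨hlip, hsurj⟩ := hstable (f v) ((hf.holo v (hS'.trans hS'v)).mono (hBS' v hS'v))
    fun x hx => (hvN ⟨hS'v, hvT⟩ x hx).le
  obtain ⟨x, hx, hfx⟩ := hsurj <| by
    rw [mem_ball, dist_eq_norm, hfw₀]
    exact hsN ⟨hSs, hsv.trans hvT⟩ z rfl
  refine ⟨hS'v, ?_, hlip⟩
  rwa [hf.transition_eq hφ (hS.trans hSs) hsv (D.stdAnnulus_subset hS hSs hz)
    (hBS' v hS'v (hεB hx)) hfx]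

theorem exists_nhds_transition_bound (hd : 1 ≤ d) (hf : IsLoewnerChain d D f)
    (hφ : IsChainTransition D f φ) {S T : ℝ} (hS : 0 ≤ S) {z : ℂ}
    (hz : z ∈ stdAnnulus (D.r S)) {s₀ t₀ : ℝ} (hs₀ : S ≤ s₀) (hst₀ : s₀ ≤ t₀) (ht₀ : t₀ ≤ T) :
    ∃ N ∈ 𝓝 (s₀, t₀), ∃ k : ℝ → ℝ, (∀ x, 0 ≤ k x) ∧ MemLp k d (volume.restrict (Icc S T)) ∧
      ∀ s u t, (s, u) ∈ N → (s, t) ∈ N → S ≤ s → s ≤ u → u ≤ t → t ≤ T →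
        ‖φ s u z - φ s t z‖ ≤ ∫ ξ in u..t, k ξ := by
  obtain ⟨S', hS', B, hB, hBS', C, hC, N, hN, hNφ⟩ :=
    hf.exists_nhds_transition_antilipschitz hd hφ hS hz hs₀ hst₀ ht₀
  obtain ⟨k, hk0, hkLp, hk⟩ := hf.lc3 S' T (hS.trans hS'.1) (hS'.2.trans ht₀) B hB hBS'
  have hind : MemLp ((Icc S' T).indicator k) d (volume.restrict (Icc S T)) := by
    rw [memLp_indicator_iff_restrict measurableSet_Icc, Measure.restrict_restrict measurableSet_Icc,
      inter_eq_left.mpr (Icc_subset_Icc_left hS'.1)]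
    exact hkLp
  refine ⟨N, hN, fun ξ => C * (Icc S' T).indicator k ξ,
    fun x => mul_nonneg hC (indicator_nonneg (fun x _ => hk0 x) x), hind.const_mul C, ?_⟩
  intro s u t hu ht hSs hsu hut htT
  obtain ⟨hS'u, hBu, -⟩ := hNφ s u hu hSs hsu (hut.trans htT)
  obtain ⟨-, hBt, hlip⟩ := hNφ s t ht hSs (hsu.trans hut) htT
  have h0s : 0 ≤ s := hS.trans hSs
  have hzs : z ∈ stdAnnulus (D.r s) := D.stdAnnulus_subset hS hSs hz
  calc ‖φ s u z - φ s t z‖ ≤ C * ‖f t (φ s u z) - f t (φ s t z)‖ := hlip _ hBu _ hBt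
    _ = C * ‖f u (φ s u z) - f t (φ s u z)‖ := by
        rw [(hφ s t h0s (hsu.trans hut) z hzs).2, (hφ s u h0s hsu z hzs).2, norm_sub_rev]
    _ ≤ C * ∫ ξ in u..t, k ξ := by gcongr; exact hk _ hBu u t hS'u hut htT
    _ = ∫ ξ in u..t, C * (Icc S' T).indicator k ξ := by
        rw [← intervalIntegral.integral_const_mul]
        refine intervalIntegral.integral_congr fun ξ hξ => ?_
        rw [uIcc_of_le hut] at hξ
        rw [indicator_of_mem (show ξ ∈ Icc S' T from ⟨hS'u.trans hξ.1, hξ.2.trans htT⟩)]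

end IsLoewnerChain

/-- Theorem 1.7: a Loewner chain of order `d` induces, via
`φ_{s,t} := f_t⁻¹ ∘ f_s`, an evolution family of order `d` over the same
canonical domain system. -/
theorem loewnerChain_to_evolutionFamily
    (d : ℝ≥0∞) (hd : 1 ≤ d) (D : CanonicalDomainSystem d) (f : ℝ → ℂ → ℂ)
    (hf : IsLoewnerChain d D f) (φ : ℝ → ℝ → ℂ → ℂ)
    (hφ : ∀ s t : ℝ, 0 ≤ s → s ≤ t → ∀ z ∈ stdAnnulus (D.r s),
      φ s t z ∈ stdAnnulus (D.r t) ∧ f t (φ s t z) = f s z) :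
    IsEvolutionFamily d D φ := by
  refine ⟨fun s t hs hst => hf.differentiableOn_transition hφ hs hst,
    fun s t hs hst z hz => (hφ s t hs hst z hz).1,
    fun s hs z hz => hf.transition_eq hφ hs le_rfl hz hz rfl, ?_, ?_⟩
  · intro s u t hs hsu hut z hz
    obtain ⟨hzu, hfzu⟩ := hφ s u hs hsu z hz
    obtain ⟨hzt, hfzt⟩ := hφ u t (hs.trans hsu) hut _ hzu
    exact hf.transition_eq hφ hs (hsu.trans hut) hz hzt (hfzt.trans hfzu)
  · intro S T hS _ z hz
    exact exists_integral_bound_of_local hd fun s₀ t₀ hs₀ hst₀ ht₀ =>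
      hf.exists_nhds_transition_bound hd hφ hS hz hs₀ hst₀ ht₀
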